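/- arXiv:1907.11672 — 3 statements merged into one kernel-verified Lean document; each statement's English description precedes it below -/
import Mathlib

section
/- Let X be a fractional allocation of the m item types that is Pareto optimal under the scaled valuations v', where v'_{ik} = v_{ik}·f_k. Let T items be given, where item t has type τ(t), and let a be any integral allocation of these items such that X_{a(t),τ(t)} > 0 for every t. Then a is Pareto optimal among integral allocations of these T items under the valuations v. -/
open Finset

/-- `X` is a fractional allocation of `m` divisible item types to `n` agents. -/
def IsAlloc {n m : ℕ} (X : Fin n → Fin m → ℝ) : Prop :=
  (∀ i j, X i j ∈ Set.Icc (0 : ℝ) 1) ∧ ∀ j, ∑ i, X i j = 1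

/-- Agent `i`'s additive value for a fractional bundle `y` under valuations `u`. -/
def val {n m : ℕ} (u : Fin n → Fin m → ℝ) (i : Fin n) (y : Fin m → ℝ) : ℝ :=
  ∑ k, u i k * y k

/-- `X` is Pareto optimal under valuations `u`. -/
def ParetoOpt {n m : ℕ} (u : Fin n → Fin m → ℝ) (X : Fin n → Fin m → ℝ) : Prop :=
  ¬ ∃ X' : Fin n → Fin m → ℝ, IsAlloc X' ∧
    (∀ i, val u i (X i) ≤ val u i (X' i)) ∧ (∃ i, val u i (X i) < val u i (X' i))

/-- Agent `i`'s utility under the integral allocation `a` of `T` items,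
where item `t` has type `τ t`. -/
def util {n m T : ℕ} (v : Fin n → Fin m → ℝ) (τ : Fin T → Fin m)
    (a : Fin T → Fin n) (i : Fin n) : ℝ :=
  ∑ t, if a t = i then v i (τ t) else 0

/-- Real-valued count of items of type `k` given to agent `i` by `a`. -/
def cnt {n m T : ℕ} (τ : Fin T → Fin m) (a : Fin T → Fin n) (i : Fin n) (k : Fin m) : ℝ :=
  ∑ t, if a t = i ∧ τ t = k then (1:ℝ) else 0

lemma cnt_nonneg {n m T : ℕ} (τ : Fin T → Fin m) (a : Fin T → Fin n) (i : Fin n) (k : Fin m) :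
    0 ≤ cnt τ a i k :=
  Finset.sum_nonneg fun t _ => by split <;> norm_num

lemma cnt_le {n m T : ℕ} (τ : Fin T → Fin m) (a : Fin T → Fin n) (i : Fin n) (k : Fin m) :
    cnt τ a i k ≤ T := by
  calc cnt τ a i k ≤ ∑ _t : Fin T, (1:ℝ) :=
        Finset.sum_le_sum fun t _ => by split <;> norm_num
    _ = T := by simp

lemma cnt_col {n m T : ℕ} (τ : Fin T → Fin m) (a : Fin T → Fin n) (k : Fin m) :
    ∑ i, cnt τ a i k = ∑ t, if τ t = k then (1:ℝ) else 0 := by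
  unfold cnt
  rw [Finset.sum_comm]
  refine Finset.sum_congr rfl fun t _ => ?_
  by_cases h : τ t = k
  · simp [h]
  · simp [h]

lemma cnt_val {n m T : ℕ} (v : Fin n → Fin m → ℝ) (τ : Fin T → Fin m) (a : Fin T → Fin n)
    (i : Fin n) : ∑ k, v i k * cnt τ a i k = util v τ a i := by
  unfold cnt util
  have : ∀ k, v i k * ∑ t, (if a t = i ∧ τ t = k then (1:ℝ) else 0)
      = ∑ t, (if a t = i ∧ τ t = k then v i k else 0) := by
    intro k
    rw [Finset.mul_sum]
    refine Finset.sum_congr rfl fun t _ => ?_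
    split <;> simp
  simp_rw [this]
  rw [Finset.sum_comm]
  refine Finset.sum_congr rfl fun t _ => ?_
  by_cases h : a t = i
  · simp [h]
  · simp [h]

/-- Let `X` be a fractional allocation of the `m` item types, Pareto optimal under the
scaled valuations `v'_{ik} = v_{ik}·f_k`, where `f` is a distribution over types.
Then any integral allocation `a` of `T` items (item `t` of type `τ t`) that assigns an
item of type `k` to agent `i` only if `X_{ik} > 0` is Pareto optimal among integral
allocations of these items under `v`. -/
theorem integral_paretoOpt_of_fractional_paretoOpt_scaled
    (n m T : ℕ) (f : Fin m → ℝ)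
    (hf0 : ∀ k, 0 < f k) (hf1 : ∀ k, f k ≤ 1) (hfsum : ∑ k, f k = 1)
    (v : Fin n → Fin m → ℝ) (hv : ∀ i k, v i k ∈ Set.Icc (0 : ℝ) 1)
    (X : Fin n → Fin m → ℝ) (hX : IsAlloc X)
    (hPO : ParetoOpt (fun i k => v i k * f k) X)
    (τ : Fin T → Fin m) (a : Fin T → Fin n)
    (ha : ∀ t, 0 < X (a t) (τ t)) :
    ¬ ∃ a' : Fin T → Fin n,
      (∀ i, util v τ a i ≤ util v τ a' i) ∧ (∃ i, util v τ a i < util v τ a' i) := by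
  rintro ⟨a', hdom, i0, hstrict⟩
  -- nonemptiness
  have hnm : (Finset.univ : Finset (Fin n × Fin m)).Nonempty := by
    have hm : (Finset.univ : Finset (Fin m)).Nonempty := by
      rcases Finset.eq_empty_or_nonempty (Finset.univ : Finset (Fin m)) with h | h
      · rw [h] at hfsum; simp at hfsum
      · exact h
    obtain ⟨k, _⟩ := hm
    exact ⟨(i0, k), Finset.mem_univ _⟩
  set g : Fin n × Fin m → ℝ :=
    fun p => if 0 < X p.1 p.2 then X p.1 p.2 * f p.2 / (T + 1) else 1 with hg
  set ε : ℝ := Finset.univ.inf' hnm g with hε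
  have hεpos : 0 < ε := by
    rw [hε, Finset.lt_inf'_iff]
    intro p _
    rw [hg]
    dsimp only
    split
    · next h => exact div_pos (mul_pos h (hf0 p.2)) (by positivity)
    · norm_num
  have hεle : ∀ i k, 0 < X i k → ε ≤ X i k * f k / (T + 1) := by
    intro i k h
    have h2 : g (i, k) = X i k * f k / (T + 1) := by rw [hg]; simp [h]
    rw [hε, ← h2]
    exact Finset.inf'_le g (Finset.mem_univ (i, k))
  -- counts
  have hXpos : ∀ i k, 0 < cnt τ a i k → 0 < X i k := by
    intro i k h
    by_contra hc
    have : cnt τ a i k = 0 := by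
      apply Finset.sum_eq_zero
      intro t _
      split
      · next ht =>
        exact absurd (ha t) (by rw [ht.1, ht.2]; exact hc)
      · rfl
    linarith
  -- the perturbed allocation
  set X' : Fin n → Fin m → ℝ :=
    fun i k => X i k + ε * (cnt τ a' i k - cnt τ a i k) / f k with hX'
  obtain ⟨hXmem, hXcol⟩ := hX
  have hcol' : ∀ k, ∑ i, X' i k = 1 := by
    intro k
    rw [hX']
    dsimp only
    rw [Finset.sum_add_distrib, hXcol]
    have : ∑ i, ε * (cnt τ a' i k - cnt τ a i k) / f k
        = ε * ((∑ i, cnt τ a' i k) - ∑ i, cnt τ a i k) / f k := by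
      rw [← Finset.sum_div, ← Finset.mul_sum, Finset.sum_sub_distrib]
    rw [this, cnt_col, cnt_col]
    simp
  have hnn : ∀ i k, 0 ≤ X' i k := by
    intro i k
    rw [hX']
    dsimp only
    rcases le_or_gt (cnt τ a i k) (cnt τ a' i k) with h | h
    · have h0 := (hXmem i k).1
      have : 0 ≤ ε * (cnt τ a' i k - cnt τ a i k) / f k := by
        apply div_nonneg _ (hf0 k).le
        nlinarith
      linarith
    · have hpos : 0 < cnt τ a i k := lt_of_le_of_lt (cnt_nonneg τ a' i k) h
      have hXik := hXpos i k hpos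
      have h1 := hεle i k hXik
      have h2 : cnt τ a i k - cnt τ a' i k ≤ T + 1 := by
        have := cnt_le τ a i k
        have := cnt_nonneg τ a' i k
        linarith
      have hfk := hf0 k
      have : ε * (cnt τ a i k - cnt τ a' i k) / f k ≤ X i k := by
        rw [div_le_iff₀ hfk]
        have hεT : ε * (cnt τ a i k - cnt τ a' i k) ≤ ε * (T + 1) := by
          apply mul_le_mul_of_nonneg_left h2 hεpos.le
        have : ε * (T + 1) ≤ X i k * f k := by
          rw [le_div_iff₀ (by positivity : (0:ℝ) < T + 1)] at h1
          linarith [h1]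
        linarith
      have : -(ε * (cnt τ a' i k - cnt τ a i k) / f k)
          = ε * (cnt τ a i k - cnt τ a' i k) / f k := by ring
      linarith
  have hle1 : ∀ i k, X' i k ≤ 1 := by
    intro i k
    have hsum := hcol' k
    have : X' i k ≤ ∑ j, X' j k :=
      Finset.single_le_sum (fun j _ => hnn j k) (Finset.mem_univ i)
    linarith
  have hval : ∀ i, val (fun i k => v i k * f k) i (X' i)
      = val (fun i k => v i k * f k) i (X i) + ε * (util v τ a' i - util v τ a i) := by
    intro i
    unfold _root_.val
    rw [hX']
    dsimp only
    have : ∀ k, v i k * f k * (X i k + ε * (cnt τ a' i k - cnt τ a i k) / f k)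
        = v i k * f k * X i k + ε * (v i k * cnt τ a' i k - v i k * cnt τ a i k) := by
      intro k
      have hfk := (hf0 k).ne'
      field_simp
    simp_rw [this]
    rw [Finset.sum_add_distrib]
    congr 1
    rw [← Finset.mul_sum, Finset.sum_sub_distrib, cnt_val, cnt_val]
  exact hPO ⟨X', ⟨fun i k => ⟨hnn i k, hle1 i k⟩, hcol'⟩,
    fun i => by
      rw [hval i]
      nlinarith [hdom i, hεpos],
    ⟨i0, by rw [hval i0]; nlinarith [hεpos]⟩⟩
end

section
/- Let v be a nonnegative n×m valuation matrix, let f_k > 0 for each item k, and define the scaled valuations v'_{ik} = v_{ik}·f_k. If a fractional allocation X is Pareto optimal under v', then X is also Pareto optimal under v. -/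
open Finset

/-- If a fractional allocation `X` is Pareto optimal under the scaled valuations
`v'_{ik} = v_{ik}·f_k` (with every `f_k > 0`), then `X` is Pareto optimal under `v`. -/
theorem paretoOpt_scaled_imp_paretoOpt (n m : ℕ) (v : Fin n → Fin m → ℝ)
    (hv : ∀ i k, 0 ≤ v i k)
    (f : Fin m → ℝ) (hf : ∀ k, 0 < f k)
    (X : Fin n → Fin m → ℝ) (hX : IsAlloc X)
    (hPO : ParetoOpt (fun i k => v i k * f k) X) :
    ParetoOpt v X := by
  rintro ⟨X', ⟨hIcc, hsum⟩, hle, i0, hlt⟩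
  rcases Nat.eq_zero_or_pos m with hm | hm
  · subst hm
    simp [_root_.val] at hlt
  · have hne : (Finset.univ : Finset (Fin m)).Nonempty := ⟨⟨0, hm⟩, mem_univ _⟩
    set c := (Finset.univ : Finset (Fin m)).inf' hne f with hc
    have hcpos : 0 < c := (Finset.lt_inf'_iff hne).mpr (fun k _ => hf k)
    have hcle : ∀ k, c ≤ f k := fun k => Finset.inf'_le f (mem_univ k)
    have hfne : ∀ k, f k ≠ 0 := fun k => (hf k).ne'
    have hlam0 : ∀ k, 0 ≤ c / f k := fun k => le_of_lt (div_pos hcpos (hf k))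
    have hlam1 : ∀ k, c / f k ≤ 1 := fun k => (div_le_one (hf k)).mpr (hcle k)
    set Y : Fin n → Fin m → ℝ := fun i k => X i k + c / f k * (X' i k - X i k) with hY
    have key : ∀ i, val (fun i k => v i k * f k) i (Y i)
        = val (fun i k => v i k * f k) i (X i)
          + c * (val v i (X' i) - val v i (X i)) := by
      intro i
      simp only [_root_.val, hY]
      have h1 : ∀ k : Fin m, v i k * f k * (X i k + c / f k * (X' i k - X i k))
          = v i k * f k * X i k + (c * (v i k * X' i k) - c * (v i k * X i k)) := by
        intro k
        have h2 : c / f k * f k = c := div_mul_cancel₀ c (hfne k)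
        linear_combination (v i k * (X' i k - X i k)) * h2
      rw [Finset.sum_congr rfl (fun k _ => h1 k), Finset.sum_add_distrib,
        Finset.sum_sub_distrib, ← Finset.mul_sum, ← Finset.mul_sum, ← mul_sub]
    apply hPO
    refine ⟨Y, ⟨⟨fun i k => ?_, fun k => ?_⟩, fun i => ?_, i0, ?_⟩⟩
    · have hx := hX.1 i k
      have hx' := hIcc i k
      simp only [Set.mem_Icc] at hx hx' ⊢
      have hYik : Y i k = (1 - c / f k) * X i k + c / f k * X' i k := by
        simp only [hY]; ring
      rw [hYik]
      constructor
      · nlinarith [hlam0 k, hlam1 k, hx.1, hx'.1]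
      · nlinarith [hlam0 k, hlam1 k, hx.2, hx'.2]
    · simp only [hY]
      rw [Finset.sum_add_distrib, ← Finset.mul_sum, Finset.sum_sub_distrib,
        hX.2 k, hsum k]
      ring
    · rw [key i]
      nlinarith [hle i, hcpos]
    · rw [key i0]
      nlinarith [hlt, hcpos]
end

section
/- Let X be a fractional allocation of the m item types that is Pareto optimal under the valuations v. Let T items be given, where item t has type τ(t), and let a be any integral allocation of these items such that X_{a(t),τ(t)} > 0 for every t. Then a is Pareto optimal among integral allocations of these T items under v. -/
/-!
Record an integral allocation `b` by the matrix `typeCount τ b` counting the items of each type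
that each agent receives: its column sums do not depend on `b`, and row `i` valued by `v i` is
agent `i`'s utility under `b`. If `a'` Pareto-dominated `a`, the direction
`D = typeCount τ a' - typeCount τ a` would keep all column sums, be negative only where
`typeCount τ a` is positive (hence where `X` is positive), and weakly improve every agent,
strictly some. A small step `X + ε • D` is then a fractional allocation Pareto-dominating `X`.
-/

open Finset

open Filter Topology

section Fractional

variable {n m : ℕ}

theorem isAlloc_of_nonneg {X : Fin n → Fin m → ℝ} (h0 : ∀ i k, 0 ≤ X i k)
    (h1 : ∀ k, ∑ i, X i k = 1) : IsAlloc X :=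
  ⟨fun i k => ⟨h0 i k, h1 k ▸ single_le_sum (fun j _ => h0 j k) (mem_univ i)⟩, h1⟩

theorem val_add_smul (u : Fin n → Fin m → ℝ) (i : Fin n) (y z : Fin m → ℝ) (c : ℝ) :
    val u i (y + c • z) = val u i y + c * val u i z := by
  simp only [_root_.val, Pi.add_apply, Pi.smul_apply, smul_eq_mul, mul_add, sum_add_distrib,
    mul_sum]
  congr 1
  exact sum_congr rfl fun k _ => mul_left_comm _ _ _

theorem val_sub (u : Fin n → Fin m → ℝ) (i : Fin n) (y z : Fin m → ℝ) :
    val u i (y - z) = val u i y - val u i z := by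
  simp only [_root_.val, Pi.sub_apply, mul_sub, sum_sub_distrib]

theorem IsAlloc.exists_add_smul {X D : Fin n → Fin m → ℝ} (hX : IsAlloc X)
    (hcol : ∀ k, ∑ i, D i k = 0) (hsupp : ∀ i k, D i k < 0 → 0 < X i k) :
    ∃ ε : ℝ, 0 < ε ∧ IsAlloc (X + ε • D) := by
  have hnonneg : ∀ i k, ∀ᶠ ε in 𝓝[>] (0 : ℝ), 0 ≤ X i k + ε * D i k := by
    intro i k
    rcases le_or_gt 0 (D i k) with hDik | hDik
    · filter_upwards [self_mem_nhdsWithin] with ε hε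
      exact add_nonneg (hX.1 i k).1 (mul_nonneg hε.le hDik)
    · have hlim : Tendsto (fun ε : ℝ => X i k + ε * D i k) (𝓝[>] 0) (𝓝 (X i k)) := by
        have := (tendsto_const_nhds (x := X i k)).add
          ((tendsto_id (x := 𝓝 (0 : ℝ))).mul_const (D i k))
        simpa using this.mono_left (nhdsWithin_le_nhds (s := Set.Ioi 0))
      exact (hlim.eventually (lt_mem_nhds (hsupp i k hDik))).mono fun _ h => h.le
  obtain ⟨ε, hε, hX'⟩ := (eventually_mem_nhdsWithin.and
    (eventually_all.2 fun i => eventually_all.2 (hnonneg i))).exists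
  refine ⟨ε, hε, isAlloc_of_nonneg (fun i k => hX' i k) fun k => ?_⟩
  simp [sum_add_distrib, ← mul_sum, hX.2 k, hcol k]

theorem ParetoOpt.not_improving_direction {u X D : Fin n → Fin m → ℝ} (hPO : ParetoOpt u X)
    (hX : IsAlloc X) (hcol : ∀ k, ∑ i, D i k = 0) (hsupp : ∀ i k, D i k < 0 → 0 < X i k) :
    ¬ ((∀ i, 0 ≤ val u i (D i)) ∧ ∃ i, 0 < val u i (D i)) := by
  rintro ⟨hge, i, hlt⟩
  obtain ⟨ε, hε, hX'⟩ := hX.exists_add_smul hcol hsupp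
  refine hPO ⟨X + ε • D, hX', fun j => ?_, i, ?_⟩ <;>
    rw [Pi.add_apply, Pi.smul_apply, val_add_smul]
  · exact le_add_of_nonneg_right (mul_nonneg hε.le (hge j))
  · exact lt_add_of_pos_right _ (mul_pos hε hlt)

end Fractional

section Integral

variable {n m T : ℕ}

def typeCount (τ : Fin T → Fin m) (b : Fin T → Fin n) (i : Fin n) (k : Fin m) : ℝ :=
  #{t | b t = i ∧ τ t = k}

theorem sum_typeCount (τ : Fin T → Fin m) (b : Fin T → Fin n) (k : Fin m) :
    ∑ i, typeCount τ b i k = #{t | τ t = k} := by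
  rw [card_eq_sum_card_fiberwise (s := {t | τ t = k}) (f := b) (t := univ)
    fun _ _ => mem_univ _]
  simp only [typeCount, filter_filter, and_comm, Nat.cast_sum]

theorem val_typeCount (u : Fin n → Fin m → ℝ) (τ : Fin T → Fin m) (b : Fin T → Fin n)
    (i : Fin n) : val u i (typeCount τ b i) = util u τ b i := by
  rw [util, ← sum_filter, ← sum_fiberwise' _ τ]
  refine sum_congr rfl fun k _ => ?_
  rw [sum_const, nsmul_eq_mul, filter_filter, typeCount, mul_comm]

theorem exists_eq_of_typeCount_pos {τ : Fin T → Fin m} {b : Fin T → Fin n} {i : Fin n}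
    {k : Fin m} (h : 0 < typeCount τ b i k) : ∃ t, b t = i ∧ τ t = k := by
  obtain ⟨t, ht⟩ := card_pos.1 (Nat.cast_pos.1 h)
  exact ⟨t, (mem_filter.1 ht).2⟩

end Integral

theorem integral_paretoOpt_of_fractional_paretoOpt_general
    (n m T : ℕ)
    (v : Fin n → Fin m → ℝ)
    (X : Fin n → Fin m → ℝ) (hX : IsAlloc X)
    (hPO : ParetoOpt v X)
    (τ : Fin T → Fin m) (a : Fin T → Fin n)
    (ha : ∀ t, 0 < X (a t) (τ t)) :
    ¬ ∃ a' : Fin T → Fin n,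
      (∀ i, util v τ a i ≤ util v τ a' i) ∧ (∃ i, util v τ a i < util v τ a' i) := by
  rintro ⟨a', hge, i, hlt⟩
  set D := typeCount τ a' - typeCount τ a
  have hcol : ∀ k, ∑ j, D j k = 0 := fun k => by
    simp [D, sum_sub_distrib, sum_typeCount]
  have hsupp : ∀ j k, D j k < 0 → 0 < X j k := by
    intro j k hneg
    have hpos : 0 < typeCount τ a j k := by
      have : (0 : ℝ) ≤ typeCount τ a' j k := Nat.cast_nonneg _
      simp only [D, Pi.sub_apply] at hneg
      linarith
    obtain ⟨t, rfl, rfl⟩ := exists_eq_of_typeCount_pos hpos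
    exact ha t
  have hval : ∀ j, val v j (D j) = util v τ a' j - util v τ a j := fun j => by
    rw [show D j = typeCount τ a' j - typeCount τ a j from rfl, val_sub, val_typeCount,
      val_typeCount]
  exact hPO.not_improving_direction hX hcol hsupp
    ⟨fun j => by linarith [hval j, hge j], i, by linarith [hval i]⟩

/-- Let `X` be a fractional allocation of the `m` item types that is Pareto optimal
under `v`. Then any integral allocation `a` of `T` items (item `t` of type `τ t`) that
assigns an item of type `k` to agent `i` only if `X_{ik} > 0` is Pareto optimal among
integral allocations of these items under `v`. -/
theorem integral_paretoOpt_of_fractional_paretoOpt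
    (n m T : ℕ)
    (v : Fin n → Fin m → ℝ) (hv : ∀ i k, v i k ∈ Set.Icc (0 : ℝ) 1)
    (X : Fin n → Fin m → ℝ) (hX : IsAlloc X)
    (hPO : ParetoOpt v X)
    (τ : Fin T → Fin m) (a : Fin T → Fin n)
    (ha : ∀ t, 0 < X (a t) (τ t)) :
    ¬ ∃ a' : Fin T → Fin n,
      (∀ i, util v τ a i ≤ util v τ a' i) ∧ (∃ i, util v τ a i < util v τ a' i) :=
  integral_paretoOpt_of_fractional_paretoOpt_general n m T v X hX hPO τ a ha
end
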